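/- arXiv:1911.09246 — 3 statements merged into one kernel-verified Lean document; each statement's English description precedes it below -/
import Mathlib

section
/- Let m ≥ 1 and ℓ ≥ 0 be integers and σ > 0. Then for all complex x, y the following sum formula holds: (−1)^m · m! · L_m^{(ℓ)}(|x+y|²; σ) · (x+y)^ℓ = Σ_{0≤i≤m+ℓ, 0≤j≤m} C(m+ℓ, i)·C(m, j)·P^{m,ℓ,σ}_{i,j}(y, ȳ)·x^i·x̄^j, where P^{m,ℓ,σ}_{i,j}(y,ȳ) = (−1)^{m−j}·(m−j)!·L^{(ℓ+j−i)}_{m−j}(|y|²; σ)·y^{ℓ+j−i} if ℓ+j ≥ i, and P^{m,ℓ,σ}_{i,j}(y,ȳ) = (−1)^{m+ℓ−i}·(m+ℓ−i)!·L^{(i−j−ℓ)}_{m+ℓ−i}(|y|²; σ)·ȳ^{i−j−ℓ} if ℓ+j ≤ i. -/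
noncomputable def lag : ℕ → ℝ → ℝ → ℝ
  | 0, _, _ => 1
  | 1, l, x => 1 + l - x
  | (k+2), l, x =>
      ((2*(k:ℝ)+3+l-x) * lag (k+1) l x - ((k:ℝ)+1+l) * lag k l x) / ((k:ℝ)+2)

/-- The scaled generalized Laguerre polynomial `L_n^{(ℓ)}(x; σ) = σ^n L_n^{(ℓ)}(x/σ)`. -/
noncomputable def lagS (n : ℕ) (l : ℝ) (x σ : ℝ) : ℝ := σ ^ n * lag n l (x / σ)

/-- The coefficient polynomials `P^{m,ℓ,σ}_{i,j}(y, ȳ)`. -/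
noncomputable def Pcoef (m ℓ : ℕ) (σ : ℝ) (i j : ℕ) (y : ℂ) : ℂ :=
  if i ≤ ℓ + j then
    ((-1 : ℂ)) ^ (m - j) * (Nat.factorial (m - j) : ℂ)
      * ((lagS (m - j) ((ℓ : ℝ) + j - i) (Complex.normSq y) σ : ℝ) : ℂ)
      * y ^ (ℓ + j - i)
  else
    ((-1 : ℂ)) ^ (m + ℓ - i) * (Nat.factorial (m + ℓ - i) : ℂ)
      * ((lagS (m + ℓ - i) ((i : ℝ) - j - ℓ) (Complex.normSq y) σ : ℝ) : ℂ)
      * (starRingEnd ℂ y) ^ (i - j - ℓ)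

/-!
Both sides are values of the complex Hermite polynomial
`H_{p,q}(z, w) = ∑ₖ (-σ)ᵏ k! C(p,k) C(q,k) z^(p-k) w^(q-k)`.
The three-term recurrence defining `lag` yields the explicit coefficients of the Laguerre
polynomials, and with them `H_{q+a,q}(z, z̄) = (-1)^q q! L_q^{(a)}(|z|²; σ) z^a`; so the left
side is `H_{m+ℓ,m}(x+y, x̄+ȳ)`. Expanding `H` at shifted arguments by the binomial theorem
produces the coefficients `H_{m+ℓ-i,m-j}(y, ȳ)`, and these are the `P_{i,j}` by the same
diagonal formula, applied to `ȳ` through the symmetry `H_{p,q}(z, w) = H_{q,p}(w, z)` when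
`ℓ + j < i`.
-/

open Finset Nat Complex ComplexConjugate

theorem choose_laguerre_recurrence_zero (n a : ℕ) :
    (n + 2) * (n + 2 + a).choose a + (n + 1 + a) * (n + a).choose a
      = (2 * n + 3 + a) * (n + 1 + a).choose a := by
  have h₁ := choose_mul_succ_eq (n + a) a
  have h₂ := choose_mul_succ_eq (n + 1 + a) a
  rw [show n + a + 1 - a = n + 1 by omega, show n + a + 1 = n + 1 + a by omega] at h₁
  rw [show n + 1 + a + 1 - a = n + 2 by omega, show n + 1 + a + 1 = n + 2 + a by omega] at h₂
  linear_combination h₁ - h₂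

theorem choose_laguerre_recurrence_succ (n a k : ℕ) :
    (n + 2) * (n + 2 + a).choose (a + k + 1) + (n + 1 + a) * (n + a).choose (a + k + 1)
      = (2 * n + 3 + a) * (n + 1 + a).choose (a + k + 1)
        + (k + 1) * (n + 1 + a).choose (a + k) := by
  have p₁ : (n + 2 + a).choose (a + k + 1)
      = (n + 1 + a).choose (a + k) + (n + 1 + a).choose (a + k + 1) := by
    rw [show n + 2 + a = n + 1 + a + 1 by omega, choose_succ_succ]
  have p₂ : (n + 1 + a).choose (a + k + 1)
      = (n + a).choose (a + k) + (n + a).choose (a + k + 1) := by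
    rw [show n + 1 + a = n + a + 1 by omega, choose_succ_succ]
  have q₁ := add_one_mul_choose_eq (n + a) (a + k)
  have q₂ := add_one_mul_choose_eq (n + 1 + a) (a + k)
  rw [show n + a + 1 = n + 1 + a by omega] at q₁
  rw [show n + 1 + a + 1 = n + 2 + a by omega] at q₂
  linear_combination (n + 3 + a + k) * p₁ + q₂ - (n + 1 + a) * p₂ - q₁

noncomputable def lagTerm (a n k : ℕ) (x : ℝ) : ℝ :=
  (-1) ^ k * ((n + a).choose (a + k) : ℝ) * x ^ k / k !

theorem lagTerm_eq_zero_of_lt {n k : ℕ} (a : ℕ) (h : n < k) (x : ℝ) :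
    lagTerm a n k x = 0 := by
  simp [lagTerm, choose_eq_zero_of_lt (show n + a < a + k by omega)]

theorem sum_range_lagTerm_of_lt {n N : ℕ} (a : ℕ) (h : n < N) (x : ℝ) :
    ∑ k ∈ range N, lagTerm a n k x = ∑ k ∈ range (n + 1), lagTerm a n k x :=
  (sum_subset (range_subset_range.2 h) fun k _ hk ↦
    lagTerm_eq_zero_of_lt a (by simpa using hk) x).symm

theorem lagTerm_recurrence_zero (a n : ℕ) (x : ℝ) :
    (n + 2 : ℝ) * lagTerm a (n + 2) 0 x
      = (2 * n + 3 + a) * lagTerm a (n + 1) 0 x - (n + 1 + a) * lagTerm a n 0 x := by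
  have h := congrArg (Nat.cast : ℕ → ℝ) (choose_laguerre_recurrence_zero n a)
  push_cast at h
  simp only [lagTerm, add_zero, pow_zero, one_mul, factorial_zero, cast_one, div_one]
  linear_combination h

theorem lagTerm_recurrence_succ (a n k : ℕ) (x : ℝ) :
    (n + 2 : ℝ) * lagTerm a (n + 2) (k + 1) x
      = (2 * n + 3 + a) * lagTerm a (n + 1) (k + 1) x - (n + 1 + a) * lagTerm a n (k + 1) x
        - x * lagTerm a (n + 1) k x := by
  have h := congrArg (Nat.cast : ℕ → ℝ) (choose_laguerre_recurrence_succ n a k)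
  push_cast at h
  simp only [lagTerm, factorial_succ, ← add_assoc, cast_mul]
  field_simp
  push_cast
  linear_combination (-1) ^ (k + 1) * x ^ (k + 1) * h

theorem lag_eq_sum_lagTerm (a n : ℕ) (x : ℝ) :
    lag n a x = ∑ k ∈ range (n + 1), lagTerm a n k x := by
  induction n using Nat.twoStepInduction with
  | zero => simp [lag, lagTerm]
  | one =>
    have h : (1 + a).choose a = 1 + a := by rw [add_comm, choose_succ_self_right]
    simp [lag, lagTerm, sum_range_succ, h, add_comm a 1, sub_eq_add_neg]
  | more n ih₁ ih₂ =>
    have key : (n + 2 : ℝ) * ∑ k ∈ range (n + 2 + 1), lagTerm a (n + 2) k x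
        = (2 * n + 3 + a - x) * ∑ k ∈ range (n + 1 + 1), lagTerm a (n + 1) k x
          - (n + 1 + a) * ∑ k ∈ range (n + 1), lagTerm a n k x :=
      calc (n + 2 : ℝ) * ∑ k ∈ range (n + 2 + 1), lagTerm a (n + 2) k x
          = ∑ k ∈ range (n + 2), (n + 2 : ℝ) * lagTerm a (n + 2) (k + 1) x
              + (n + 2 : ℝ) * lagTerm a (n + 2) 0 x := by rw [mul_sum, sum_range_succ']
        _ = (2 * n + 3 + a) * ∑ k ∈ range (n + 2 + 1), lagTerm a (n + 1) k x
              - (n + 1 + a) * ∑ k ∈ range (n + 2 + 1), lagTerm a n k x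
              - x * ∑ k ∈ range (n + 2), lagTerm a (n + 1) k x := by
            simp only [lagTerm_recurrence_succ, lagTerm_recurrence_zero, sum_sub_distrib,
              ← mul_sum, sum_range_succ' _ (n + 2)]
            ring
        _ = _ := by
            rw [sum_range_lagTerm_of_lt a (show n + 1 < n + 2 + 1 by omega),
              sum_range_lagTerm_of_lt a (show n < n + 2 + 1 by omega)]
            ring
    rw [lag, ih₁, ih₂, ← key]
    field_simp

theorem choose_mul_choose_sub_comm (p k i : ℕ) :
    p.choose k * (p - k).choose i = p.choose i * (p - i).choose k := by
  have h₁ := choose_mul (n := p) (Nat.le_add_right k i)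
  have h₂ := choose_mul (n := p) (Nat.le_add_left i k)
  rw [Nat.add_sub_cancel_left] at h₁
  rw [Nat.add_sub_cancel] at h₂
  rw [← h₁, ← h₂, choose_symm_add]

theorem choose_mul_add_pow {R : Type*} [CommSemiring R] (p k : ℕ) (z u : R) :
    (p.choose k : R) * (z + u) ^ (p - k)
      = ∑ i ∈ range (p + 1),
          (p.choose i * (p - i).choose k : ℕ) * z ^ i * u ^ (p - i - k) := by
  calc (p.choose k : R) * (z + u) ^ (p - k)
      = ∑ i ∈ range (p - k + 1),
          (p.choose i * (p - i).choose k : ℕ) * z ^ i * u ^ (p - i - k) := by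
        rw [add_pow, mul_sum]
        refine sum_congr rfl fun i _ ↦ ?_
        rw [← choose_mul_choose_sub_comm, Nat.sub_right_comm]
        push_cast
        ring
    _ = _ := sum_subset (range_subset_range.2 (by omega)) fun i hp hk ↦ by
        simp [choose_eq_zero_of_lt (show p - i < k by simp at hp hk; omega)]

noncomputable def complexHermite (p q : ℕ) (σ : ℝ) (z w : ℂ) : ℂ :=
  ∑ k ∈ range (q + 1),
    (-σ : ℂ) ^ k * k ! * p.choose k * q.choose k * z ^ (p - k) * w ^ (q - k)

theorem complexHermite_eq_sum_range {p q N : ℕ} (h : q ≤ N) (σ : ℝ) (z w : ℂ) :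
    complexHermite p q σ z w = ∑ k ∈ range (N + 1),
      (-σ : ℂ) ^ k * k ! * p.choose k * q.choose k * z ^ (p - k) * w ^ (q - k) :=
  sum_subset (range_subset_range.2 (by omega)) fun k _ hk ↦ by
    simp [choose_eq_zero_of_lt (show q < k by simpa using hk)]

theorem complexHermite_comm (p q : ℕ) (σ : ℝ) (z w : ℂ) :
    complexHermite p q σ z w = complexHermite q p σ w z := by
  rw [complexHermite_eq_sum_range (le_add_self (a := p)),
    complexHermite_eq_sum_range (le_add_self (a := q)), add_comm q p]
  exact sum_congr rfl fun k _ ↦ by ring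

theorem complexHermite_add (p q : ℕ) (σ : ℝ) (z u w v : ℂ) :
    complexHermite p q σ (z + u) (w + v)
      = ∑ i ∈ range (p + 1), ∑ j ∈ range (q + 1),
          (p.choose i : ℂ) * q.choose j * complexHermite (p - i) (q - j) σ u v
            * z ^ i * w ^ j := by
  calc complexHermite p q σ (z + u) (w + v)
      = ∑ k ∈ range (q + 1), (-σ : ℂ) ^ k * k !
          * ((p.choose k : ℂ) * (z + u) ^ (p - k)) * ((q.choose k : ℂ) * (w + v) ^ (q - k)) :=
        sum_congr rfl fun k _ ↦ by ring
    _ = ∑ k ∈ range (q + 1), ∑ i ∈ range (p + 1), ∑ j ∈ range (q + 1),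
          (-σ : ℂ) ^ k * k ! * ((p.choose i * (p - i).choose k : ℕ) * z ^ i * u ^ (p - i - k))
            * ((q.choose j * (q - j).choose k : ℕ) * w ^ j * v ^ (q - j - k)) := by
        simp_rw [choose_mul_add_pow, mul_sum, sum_mul]
        exact sum_congr rfl fun k _ ↦ sum_comm
    _ = ∑ i ∈ range (p + 1), ∑ j ∈ range (q + 1), ∑ k ∈ range (q + 1),
          (-σ : ℂ) ^ k * k ! * ((p.choose i * (p - i).choose k : ℕ) * z ^ i * u ^ (p - i - k))
            * ((q.choose j * (q - j).choose k : ℕ) * w ^ j * v ^ (q - j - k)) := by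
        rw [sum_comm]
        exact sum_congr rfl fun i _ ↦ sum_comm
    _ = _ := by
        simp_rw [complexHermite_eq_sum_range (N := q) tsub_le_self, mul_sum, sum_mul]
        refine sum_congr rfl fun i _ ↦ sum_congr rfl fun j _ ↦ sum_congr rfl fun k _ ↦ ?_
        push_cast
        ring

theorem complexHermite_add_conj_self (a q : ℕ) {σ : ℝ} (hσ : σ ≠ 0) (z : ℂ) :
    complexHermite (q + a) q σ z (conj z)
      = (-1) ^ q * q ! * (lagS q a (normSq z) σ : ℂ) * z ^ a := by
  rw [lagS, lag_eq_sum_lagTerm, complexHermite, ← sum_range_reflect]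
  push_cast
  simp only [mul_sum, sum_mul]
  refine sum_congr rfl fun k hk ↦ ?_
  obtain ⟨r, rfl⟩ : ∃ r, q = k + r := ⟨q - k, by simp at hk; omega⟩
  have hsymm : (k + r + a).choose r = (k + r + a).choose (a + k) := by
    rw [show k + r + a = a + k + r by omega, choose_symm_add]
  have hfact := congrArg (Nat.cast : ℕ → ℂ) (add_choose_mul_factorial_mul_factorial k r)
  push_cast at hfact
  rw [show k + r - k = r by omega, show k + r + a - r = a + k by omega,
    show k + r - r = k by omega, lagTerm, hsymm, ← hfact]
  push_cast
  have hσ' : (σ : ℂ) ≠ 0 := ofReal_ne_zero.2 hσ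
  have hk' : (k ! : ℂ) ≠ 0 := cast_ne_zero.2 (factorial_ne_zero k)
  rw [← mul_conj, div_pow, mul_pow, pow_add, pow_add, neg_pow]
  field_simp
  rw [← pow_mul, pow_mul', neg_one_sq, one_pow]
  ring

theorem complexHermite_conj_self_eq_Pcoef {m ℓ i j : ℕ} (hi : i ≤ m + ℓ) (hj : j ≤ m)
    {σ : ℝ} (hσ : σ ≠ 0) (y : ℂ) :
    complexHermite (m + ℓ - i) (m - j) σ y (conj y) = Pcoef m ℓ σ i j y := by
  unfold Pcoef
  split_ifs with hij
  · rw [show m + ℓ - i = m - j + (ℓ + j - i) by omega, complexHermite_add_conj_self _ _ hσ,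
      Nat.cast_sub hij]
    push_cast
    rfl
  · have h := complexHermite_add_conj_self (i - j - ℓ) (m + ℓ - i) hσ (conj y)
    rw [conj_conj, normSq_conj] at h
    rw [complexHermite_comm, show m - j = m + ℓ - i + (i - j - ℓ) by omega, h,
      Nat.cast_sub (by omega), Nat.cast_sub (by omega)]

theorem laguerre_sum_formula_general (m ℓ : ℕ) (σ : ℝ) (hσ : 0 < σ) (x y : ℂ) :
    ((-1 : ℂ)) ^ m * (Nat.factorial m : ℂ)
        * ((lagS m (ℓ : ℝ) (Complex.normSq (x + y)) σ : ℝ) : ℂ) * (x + y) ^ ℓ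
      = ∑ i ∈ Finset.range (m + ℓ + 1), ∑ j ∈ Finset.range (m + 1),
          ((m + ℓ).choose i : ℂ) * (m.choose j : ℂ) * Pcoef m ℓ σ i j y
            * x ^ i * (starRingEnd ℂ x) ^ j := by
  rw [← complexHermite_add_conj_self ℓ m hσ.ne', map_add, complexHermite_add]
  refine sum_congr rfl fun i hi ↦ sum_congr rfl fun j hj ↦ ?_
  rw [complexHermite_conj_self_eq_Pcoef (mem_range_succ_iff.1 hi) (mem_range_succ_iff.1 hj)
    hσ.ne']

theorem laguerre_sum_formula (m ℓ : ℕ) (hm : 1 ≤ m) (σ : ℝ) (hσ : 0 < σ) (x y : ℂ) :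
    ((-1 : ℂ)) ^ m * (Nat.factorial m : ℂ)
        * ((lagS m (ℓ : ℝ) (Complex.normSq (x + y)) σ : ℝ) : ℂ) * (x + y) ^ ℓ
      = ∑ i ∈ Finset.range (m + ℓ + 1), ∑ j ∈ Finset.range (m + 1),
          ((m + ℓ).choose i : ℂ) * (m.choose j : ℂ) * Pcoef m ℓ σ i j y
            * x ^ i * (starRingEnd ℂ x) ^ j :=
  laguerre_sum_formula_general m ℓ σ hσ x y
end

section
/- Let a₁ > 0, a₂ ∈ ℝ with a₂ ≥ 0, set r = a₁/a₂ (assuming a₂ > 0), and let 2 < p < 2 + 2·r·(r + √(1+r²)). Then there exists η > 0 such that the quadratic form A(f,g) = (1/4 − η)·a₁·f² + ((p−2)/4)·a₂·f·g + ((p−1)/4 − η)·a₁·g² is nonnegative for all real f, g. -/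
/-!
With `r = a₁ / a₂` and `q = p - 2`, the bound on `p` says that `q` lies below the larger root
`2 r (r + √(1 + r ^ 2))` of `q ^ 2 - 4 r ^ 2 (q + 1)`, i.e. the form with `η = 0` has strictly
negative discriminant `(p - 2) ^ 2 a₂ ^ 2 - 4 (p - 1) a₁ ^ 2`. A strict inequality survives a small
perturbation, which provides `η`.
-/

open Filter Topology

theorem quadratic_form_nonneg_of_sq_le {α β γ : ℝ} (hα : 0 ≤ α) (hγ : 0 ≤ γ)
    (hdisc : β ^ 2 ≤ 4 * α * γ) (x y : ℝ) :
    0 ≤ α * x ^ 2 + β * x * y + γ * y ^ 2 := by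
  rcases hα.eq_or_lt with rfl | hα
  · obtain rfl : β = 0 := by nlinarith [sq_nonneg β]
    simpa using mul_nonneg hγ (sq_nonneg y)
  · have hsq : 4 * α * (α * x ^ 2 + β * x * y + γ * y ^ 2)
        = (2 * α * x + β * y) ^ 2 + (4 * α * γ - β ^ 2) * y ^ 2 := by ring
    have : 0 ≤ 4 * α * (α * x ^ 2 + β * x * y + γ * y ^ 2) := by
      rw [hsq]
      exact add_nonneg (sq_nonneg _) (mul_nonneg (by linarith) (sq_nonneg y))
    exact (mul_nonneg_iff_of_pos_left (by positivity)).1 this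

theorem exists_pos_quadratic_form_sub_nonneg {α β γ : ℝ} (hα : 0 < α)
    (hdisc : β ^ 2 < 4 * α * γ) (c : ℝ) :
    ∃ η > 0, ∀ x y : ℝ, 0 ≤ (α - η * c) * x ^ 2 + β * x * y + (γ - η * c) * y ^ 2 := by
  have hγ : 0 < γ := by nlinarith [sq_nonneg β]
  have hnear : ∀ᶠ η in 𝓝 (0 : ℝ),
      0 < α - η * c ∧ 0 < γ - η * c ∧ β ^ 2 < 4 * (α - η * c) * (γ - η * c) := by
    refine (ContinuousAt.eventually_lt (f := fun _ => (0 : ℝ)) (by fun_prop) (by fun_prop)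
      (by simpa using hα)).and ((ContinuousAt.eventually_lt (f := fun _ => (0 : ℝ))
      (by fun_prop) (by fun_prop) (by simpa using hγ)).and
      (ContinuousAt.eventually_lt (by fun_prop) (by fun_prop) (by simpa using hdisc)))
  obtain ⟨η, ⟨hαη, hγη, hdiscη⟩, hη⟩ :=
    ((hnear.filter_mono nhdsWithin_le_nhds).and (self_mem_nhdsWithin (s := Set.Ioi 0))).exists
  exact ⟨η, hη, quadratic_form_nonneg_of_sq_le hαη.le hγη.le hdiscη.le⟩

/-- The quadratic `q ^ 2 - 4 r ^ 2 q - 4 r ^ 2` has the roots `2 r (r ± √(1 + r ^ 2))`. -/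
theorem sq_lt_four_mul_sq_mul_add_one {q r : ℝ} (hq : 0 ≤ q)
    (h : q < 2 * r * (r + √(1 + r ^ 2))) : q ^ 2 < 4 * r ^ 2 * (q + 1) := by
  set s := √(1 + r ^ 2)
  have hs : s ^ 2 = 1 + r ^ 2 := Real.sq_sqrt (by positivity)
  have hrs : |r| < s := Real.lt_sqrt_of_sq_lt (by rw [sq_abs]; linarith)
  have hsum : 0 < r + s := by linarith [neg_abs_le r]
  have hr : 0 < r := by linarith [pos_of_mul_pos_left (hq.trans_lt h) hsum.le]
  have hfactor : q ^ 2 - 4 * r ^ 2 * (q + 1) = (q - 2 * r * (r + s)) * (q - 2 * r * (r - s)) := by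
    linear_combination (4 * r ^ 2) * hs
  have hsmall : 0 < q - 2 * r * (r - s) := by
    nlinarith [mul_neg_of_pos_of_neg hr (by linarith [le_abs_self r] : r - s < 0)]
  nlinarith [mul_neg_of_neg_of_pos (by linarith : q - 2 * r * (r + s) < 0) hsmall]

theorem quadratic_form_nonneg (a₁ a₂ p : ℝ) (ha₁ : 0 < a₁) (ha₂ : 0 < a₂)
    (hp₂ : 2 < p)
    (hp : p < 2 + 2 * (a₁ / a₂) * (a₁ / a₂ + Real.sqrt (1 + (a₁ / a₂) ^ 2))) :
    ∃ η : ℝ, 0 < η ∧ ∀ f g : ℝ,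
      0 ≤ (1 / 4 - η) * a₁ * f ^ 2 + ((p - 2) / 4) * a₂ * f * g
          + ((p - 1) / 4 - η) * a₁ * g ^ 2 := by
  have hkey : (p - 2) ^ 2 < 4 * (a₁ / a₂) ^ 2 * (p - 2 + 1) :=
    sq_lt_four_mul_sq_mul_add_one (by linarith) (by linarith)
  have hdisc : ((p - 2) / 4 * a₂) ^ 2 < 4 * (a₁ / 4) * ((p - 1) / 4 * a₁) := by
    have hscaled := mul_lt_mul_of_pos_right hkey (pow_pos ha₂ 2)
    field_simp at hscaled
    linear_combination hscaled / 16
  obtain ⟨η, hη, hnonneg⟩ := exists_pos_quadratic_form_sub_nonneg (by positivity) hdisc a₁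
  refine ⟨η, hη, fun f g => ?_⟩
  convert hnonneg f g using 1
  ring
end

section
/- Let ε > 0 and k ≥ 1 an integer. Then there is a constant C = C(ε, k) such that for all N ∈ ℕ: Σ_{n₁,…,n_k ∈ ℤ², |n_j| ≤ N for all j} ⟨n₁+⋯+n_k⟩^{−2ε}·Π_{j=1}^{k} ⟨n_j⟩^{−2} ≤ C, uniformly in N. -/
/-- The Japanese bracket `⟨n⟩ = √(1+|n|²)` for a lattice point `n ∈ ℤ²`. -/
noncomputable def jap (n : ℤ × ℤ) : ℝ := Real.sqrt (1 + ((n.1 ^ 2 + n.2 ^ 2 : ℤ) : ℝ))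

/-- The set of lattice points `n ∈ ℤ²` with Euclidean norm `|n| ≤ N`. -/
noncomputable def latticeBall (N : ℕ) : Finset (ℤ × ℤ) :=
  (Finset.Icc (-(N : ℤ), -(N : ℤ)) ((N : ℤ), (N : ℤ))).filter
    (fun n => n.1 ^ 2 + n.2 ^ 2 ≤ (N : ℤ) ^ 2)

lemma one_le_jap (n : ℤ × ℤ) : 1 ≤ jap n := by
  rw [jap, Real.one_le_sqrt]
  have := sq_nonneg ((n.1:ℝ)); have := sq_nonneg ((n.2:ℝ))
  push_cast
  linarith

lemma jap_pos (n : ℤ × ℤ) : 0 < jap n := lt_of_lt_of_le one_pos (one_le_jap n)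

lemma jap_sq (n : ℤ × ℤ) : jap n ^ 2 = 1 + ((n.1:ℝ) ^ 2 + (n.2:ℝ) ^ 2) := by
  rw [jap, Real.sq_sqrt] <;> push_cast <;> nlinarith [sq_nonneg ((n.1:ℝ)), sq_nonneg ((n.2:ℝ))]

/-- triangle-type inequality: jap m ≤ √2 * jap n * jap (m+n) -/
lemma jap_tri (m n : ℤ × ℤ) : jap m ^ 2 ≤ 2 * (jap n)^2 * (jap (m+n))^2 := by
  rw [jap_sq, jap_sq, jap_sq]
  have h1 : ((m+n).1 : ℝ) = (m.1:ℝ) + n.1 := by simp [Prod.fst_add]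
  have h2 : ((m+n).2 : ℝ) = (m.2:ℝ) + n.2 := by simp [Prod.snd_add]
  rw [h1, h2]
  nlinarith [sq_nonneg ((m.1:ℝ) + 2*n.1), sq_nonneg ((m.2:ℝ) + 2*n.2),
    sq_nonneg ((n.1:ℝ)), sq_nonneg ((n.2:ℝ)), sq_nonneg ((n.1:ℝ)*(m.2+n.2)), sq_nonneg ((n.2:ℝ)*(m.1+n.1)),
    sq_nonneg ((n.1:ℝ)*(m.2+n.2) - (n.2:ℝ)*(m.1+n.1))]

lemma summable_aux {t : ℝ} (ht : 1/2 < t) :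
    Summable (fun n : ℤ => (1 + (n:ℝ)^2) ^ (-t)) := by
  have h2t : 1 < 2*t := by linarith
  have hsum : Summable (fun n : ℤ => |(n:ℝ)| ^ (-(2*t)) + (if n = 0 then (1:ℝ) else 0)) := by
    apply Summable.add (Real.summable_abs_int_rpow h2t)
    apply summable_of_ne_finset_zero (s := {(0:ℤ)})
    intro b hb
    simp only [Finset.mem_singleton] at hb
    simp [hb]
  apply Summable.of_nonneg_of_le (fun n => by positivity) _ hsum
  intro n
  rcases eq_or_ne n 0 with rfl | hn
  · simp [Real.zero_rpow (by linarith : -(2*t) ≠ 0)]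
  · have h1 : (1:ℝ) ≤ |(n:ℝ)| := by
      rw [← Int.cast_abs]
      exact_mod_cast Int.one_le_abs (by exact_mod_cast hn)
    have habs : ((n:ℝ))^2 = |(n:ℝ)|^2 := (sq_abs _).symm
    have key : (1 + (n:ℝ)^2) ^ (-t) ≤ |(n:ℝ)| ^ (-(2*t)) := by
      have h3 : |(n:ℝ)| ^ (-(2*t)) = (|(n:ℝ)|^2 : ℝ) ^ (-t) := by
        rw [← Real.rpow_natCast |(n:ℝ)| 2, ← Real.rpow_mul (abs_nonneg _)]
        norm_num
      rw [h3]
      have hb0 : (0:ℝ) < |(n:ℝ)|^2 := by positivity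
      have hb1 : |(n:ℝ)|^2 ≤ 1 + (n:ℝ)^2 := by rw [sq_abs]; linarith
      exact Real.rpow_le_rpow_of_nonpos hb0 hb1 (by linarith)
    have : (0:ℝ) ≤ if n = 0 then (1:ℝ) else 0 := by positivity
    linarith

set_option maxHeartbeats 1000000 in
lemma summable_jap {s : ℝ} (hs : 2 < s) : Summable (fun n : ℤ × ℤ => jap n ^ (-s)) := by
  have ht : 1/2 < s/4 := by linarith
  have h1 := summable_aux ht
  have hprod : Summable (fun n : ℤ × ℤ =>
      (1 + (n.1:ℝ)^2) ^ (-(s/4)) * (1 + (n.2:ℝ)^2) ^ (-(s/4))) :=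
    Summable.mul_of_nonneg h1 h1 (fun n => by positivity) (fun n => by positivity)
  apply Summable.of_nonneg_of_le (fun n => Real.rpow_nonneg (jap_pos n).le _) _ hprod
  intro n
  set x := (n.1:ℝ); set y := (n.2:ℝ)
  have hB : (0:ℝ) < (1+x^2)*(1+y^2) := by positivity
  have hAB : Real.sqrt ((1+x^2)*(1+y^2)) ≤ 1 + (x^2 + y^2) := by
    rw [show (1:ℝ) + (x^2+y^2) = Real.sqrt ((1+(x^2+y^2))^2) from
      (Real.sqrt_sq (by positivity)).symm]
    apply Real.sqrt_le_sqrt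
    nlinarith [sq_nonneg (x*y)]
  have e1 : jap n = Real.sqrt (1 + (x^2 + y^2)) := by
    rw [jap]; push_cast; ring_nf; rfl
  calc jap n ^ (-s) = (1 + (x^2+y^2)) ^ (-(s/2)) := by
        rw [e1, Real.sqrt_eq_rpow, ← Real.rpow_mul (by positivity)]
        ring_nf
    _ ≤ (Real.sqrt ((1+x^2)*(1+y^2))) ^ (-(s/2)) :=
        Real.rpow_le_rpow_of_nonpos (Real.sqrt_pos.mpr hB) hAB (by linarith)
    _ = (1 + x^2) ^ (-(s/4)) * (1 + y^2) ^ (-(s/4)) := by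
        rw [Real.sqrt_eq_rpow, ← Real.rpow_mul (by positivity),
          Real.mul_rpow (by positivity) (by positivity)]
        ring_nf

lemma sum_jap_le {s : ℝ} (hs : 2 < s) :
    ∃ S : ℝ, 0 < S ∧ ∀ (F : Finset (ℤ × ℤ)) (m : ℤ × ℤ),
      ∑ n ∈ F, jap (m + n) ^ (-s) ≤ S := by
  refine ⟨∑' n : ℤ × ℤ, jap n ^ (-s) + 1, ?_, ?_⟩
  · have : (0:ℝ) ≤ ∑' n : ℤ × ℤ, jap n ^ (-s) :=
      tsum_nonneg (fun n => Real.rpow_nonneg (jap_pos n).le _)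
    linarith
  · intro F m
    have h1 : ∑ n ∈ F, jap (m + n) ^ (-s) = ∑ n ∈ F.image (fun x => m + x), jap n ^ (-s) := by
      rw [Finset.sum_image]
      intro a _ b _ h
      exact add_left_cancel h
    rw [h1]
    have h2 := Summable.sum_le_tsum (F.image (fun x => m + x))
      (fun n _ => Real.rpow_nonneg (jap_pos n).le _) (summable_jap hs)
    linarith


lemma gain_lemma {a : ℝ} (ha : 0 < a) (ha2 : a ≤ 2) {M Z : ℝ} (hM : 1 ≤ M) (hZ : 1 ≤ Z)
    (h : M ^ 2 ≤ 4 * Z ^ 4) : Z ^ (-(a/2)) ≤ 2 * M ^ (-(a/4)) := by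
  have hM0 : (0:ℝ) < M := lt_of_lt_of_le one_pos hM
  have hZ0 : (0:ℝ) < Z := lt_of_lt_of_le one_pos hZ
  have hM2Z : M ≤ 2 * Z ^ 2 := by
    have h4 : M ^ 2 ≤ (2 * Z ^ 2) ^ 2 := by nlinarith
    nlinarith [sq_nonneg (M - 2 * Z ^ 2), sq_nonneg (M + 2 * Z ^ 2)]
  have step2 : M ^ (a/4) ≤ 2 * Z ^ (a/2) := by
    calc M ^ (a/4) ≤ (2 * Z ^ 2) ^ (a/4) :=
          Real.rpow_le_rpow hM0.le hM2Z (by linarith)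
      _ = 2 ^ (a/4) * Z ^ (a/2) := by
          rw [Real.mul_rpow (by norm_num) (by positivity),
            ← Real.rpow_natCast Z 2, ← Real.rpow_mul hZ0.le]
          norm_num
          left
          congr 1
          ring
      _ ≤ 2 * Z ^ (a/2) := by
          have h21 : (2:ℝ) ^ (a/4) ≤ 2 ^ (1:ℝ) :=
            Real.rpow_le_rpow_of_exponent_le (by norm_num) (by linarith)
          rw [Real.rpow_one] at h21
          have : (0:ℝ) ≤ Z ^ (a/2) := Real.rpow_nonneg hZ0.le _
          nlinarith
  have hu : (0:ℝ) < M ^ (a/4) := Real.rpow_pos_of_pos hM0 _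
  have hv : (0:ℝ) < Z ^ (a/2) := Real.rpow_pos_of_pos hZ0 _
  rw [Real.rpow_neg hZ0.le, Real.rpow_neg hM0.le]
  rw [inv_eq_one_div, inv_eq_one_div, mul_one_div, div_le_div_iff₀ hv hu]
  nlinarith

lemma key_pointwise {a : ℝ} (ha : 0 < a) (ha2 : a ≤ 2) (m n : ℤ × ℤ) :
    jap n ^ (-(2:ℝ)) * jap (m + n) ^ (-a) ≤
      2 * jap m ^ (-(a/4)) * (jap n ^ (-(2 + a/2)) + jap (m + n) ^ (-(2 + a/2))) := by
  have hn := jap_pos n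
  have hmn := jap_pos (m + n)
  have hm := jap_pos m
  have h1n := one_le_jap n
  have h1mn := one_le_jap (m + n)
  have h1m := one_le_jap m
  have htri := jap_tri m n
  have hXnn : (0:ℝ) ≤ jap n ^ (-(2:ℝ)) := Real.rpow_nonneg hn.le _
  have hMnn : (0:ℝ) ≤ jap m ^ (-(a/4)) := Real.rpow_nonneg hm.le _
  rcases le_total (jap n) (jap (m + n)) with hc | hc
  · -- gain from jap (m+n)
    have hgain : jap (m+n) ^ (-(a/2)) ≤ 2 * jap m ^ (-(a/4)) :=
      gain_lemma ha ha2 h1m h1mn (by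
        nlinarith [mul_le_mul_of_nonneg_right (mul_le_mul hc hc hn.le hmn.le)
          (sq_nonneg (jap (m+n))), sq_nonneg (jap (m+n) ^ 2)])
    have hsplit : jap (m+n) ^ (-a) = jap (m+n) ^ (-(a/2)) * jap (m+n) ^ (-(a/2)) := by
      rw [← Real.rpow_add hmn]; ring_nf
    have hmono : jap (m+n) ^ (-(a/2)) ≤ jap n ^ (-(a/2)) :=
      Real.rpow_le_rpow_of_nonpos hn hc (by linarith)
    have hcomb : jap n ^ (-(2:ℝ)) * jap n ^ (-(a/2)) = jap n ^ (-(2 + a/2)) := by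
      rw [← Real.rpow_add hn]; ring_nf
    have h1 : jap n ^ (-(2:ℝ)) * jap (m + n) ^ (-a)
        ≤ (jap n ^ (-(2:ℝ)) * jap n ^ (-(a/2))) * (2 * jap m ^ (-(a/4))) := by
      rw [hsplit]
      have hA : (0:ℝ) ≤ jap (m+n) ^ (-(a/2)) := Real.rpow_nonneg hmn.le _
      have hB : (0:ℝ) ≤ jap n ^ (-(a/2)) := Real.rpow_nonneg hn.le _
      calc jap n ^ (-(2:ℝ)) * (jap (m+n) ^ (-(a/2)) * jap (m+n) ^ (-(a/2)))
          ≤ jap n ^ (-(2:ℝ)) * (jap n ^ (-(a/2)) * (2 * jap m ^ (-(a/4)))) := by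
            apply mul_le_mul_of_nonneg_left _ hXnn
            exact mul_le_mul hmono hgain hA hB
        _ = (jap n ^ (-(2:ℝ)) * jap n ^ (-(a/2))) * (2 * jap m ^ (-(a/4))) := by ring
    rw [hcomb] at h1
    have hpos : (0:ℝ) ≤ jap (m+n) ^ (-(2 + a/2)) := Real.rpow_nonneg hmn.le _
    have hpos2 : (0:ℝ) ≤ jap n ^ (-(2 + a/2)) := Real.rpow_nonneg hn.le _
    nlinarith
  · -- gain from jap n
    have hgain : jap n ^ (-(a/2)) ≤ 2 * jap m ^ (-(a/4)) :=
      gain_lemma ha ha2 h1m h1n (by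
        nlinarith [mul_le_mul_of_nonneg_right (mul_le_mul hc hc hmn.le hn.le)
          (sq_nonneg (jap n)), sq_nonneg (jap n ^ 2)])
    have hsplit : jap n ^ (-(2:ℝ)) = jap n ^ (-(a/2)) * jap n ^ (-(2 - a/2)) := by
      rw [← Real.rpow_add hn]; ring_nf
    have hmono : jap n ^ (-(2 - a/2)) ≤ jap (m+n) ^ (-(2 - a/2)) :=
      Real.rpow_le_rpow_of_nonpos hmn hc (by linarith)
    have hcomb : jap (m+n) ^ (-(2 - a/2)) * jap (m+n) ^ (-a) = jap (m+n) ^ (-(2 + a/2)) := by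
      rw [← Real.rpow_add hmn]; ring_nf
    have hYa : (0:ℝ) ≤ jap (m+n) ^ (-a) := Real.rpow_nonneg hmn.le _
    have hB : (0:ℝ) ≤ jap n ^ (-(2 - a/2)) := Real.rpow_nonneg hn.le _
    have hB' : (0:ℝ) ≤ jap (m+n) ^ (-(2 - a/2)) := Real.rpow_nonneg hmn.le _
    have hA : (0:ℝ) ≤ jap n ^ (-(a/2)) := Real.rpow_nonneg hn.le _
    have h1 : jap n ^ (-(2:ℝ)) * jap (m + n) ^ (-a)
        ≤ (2 * jap m ^ (-(a/4))) * (jap (m+n) ^ (-(2 - a/2)) * jap (m+n) ^ (-a)) := by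
      rw [hsplit]
      calc jap n ^ (-(a/2)) * jap n ^ (-(2 - a/2)) * jap (m + n) ^ (-a)
          ≤ (2 * jap m ^ (-(a/4))) * jap (m+n) ^ (-(2 - a/2)) * jap (m + n) ^ (-a) := by
            apply mul_le_mul_of_nonneg_right _ hYa
            exact mul_le_mul hgain hmono hB (by positivity)
        _ = (2 * jap m ^ (-(a/4))) * (jap (m+n) ^ (-(2 - a/2)) * jap (m + n) ^ (-a)) := by ring
    rw [hcomb] at h1
    have hpos2 : (0:ℝ) ≤ jap n ^ (-(2 + a/2)) := Real.rpow_nonneg hn.le _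
    nlinarith

lemma lemmaA {a : ℝ} (ha : 0 < a) (ha2 : a ≤ 2) :
    ∃ C : ℝ, 0 < C ∧ ∀ (F : Finset (ℤ × ℤ)) (m : ℤ × ℤ),
      ∑ n ∈ F, jap n ^ (-(2:ℝ)) * jap (m + n) ^ (-a) ≤ C * jap m ^ (-(a/4)) := by
  obtain ⟨S, hS, hSle⟩ := sum_jap_le (s := 2 + a/2) (by linarith)
  refine ⟨4 * S, by linarith, fun F m => ?_⟩
  have hMnn : (0:ℝ) ≤ jap m ^ (-(a/4)) := Real.rpow_nonneg (jap_pos m).le _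
  calc ∑ n ∈ F, jap n ^ (-(2:ℝ)) * jap (m + n) ^ (-a)
      ≤ ∑ n ∈ F, 2 * jap m ^ (-(a/4)) * (jap n ^ (-(2 + a/2)) + jap (m + n) ^ (-(2 + a/2))) :=
        Finset.sum_le_sum (fun n _ => key_pointwise ha ha2 m n)
    _ = 2 * jap m ^ (-(a/4)) *
        ((∑ n ∈ F, jap n ^ (-(2 + a/2))) + ∑ n ∈ F, jap (m + n) ^ (-(2 + a/2))) := by
        rw [← Finset.mul_sum, Finset.sum_add_distrib]
    _ ≤ 2 * jap m ^ (-(a/4)) * (S + S) := by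
        apply mul_le_mul_of_nonneg_left _ (by linarith)
        have h1 : ∑ n ∈ F, jap n ^ (-(2 + a/2)) ≤ S := by
          have := hSle F 0
          simpa using this
        exact add_le_add h1 (hSle F m)
    _ = 4 * S * jap m ^ (-(a/4)) := by ring

lemma sum_piFinset_cons {k : ℕ} (s : Finset (ℤ × ℤ)) (f : (Fin (k+1) → ℤ × ℤ) → ℝ) :
    ∑ n ∈ Fintype.piFinset (fun _ : Fin (k+1) => s), f n
      = ∑ x ∈ s, ∑ y ∈ Fintype.piFinset (fun _ : Fin k => s), f (Fin.cons x y) := by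
  rw [← Finset.sum_product']
  apply Finset.sum_nbij' (i := fun n => (n 0, Fin.tail n)) (j := fun p => Fin.cons p.1 p.2)
  · intro n hn
    rw [Fintype.mem_piFinset] at hn
    simp only [Finset.mem_product, Fintype.mem_piFinset]
    exact ⟨hn 0, fun i => hn _⟩
  · intro p hp
    simp only [Finset.mem_product, Fintype.mem_piFinset] at hp
    rw [Fintype.mem_piFinset]
    intro i
    refine Fin.cases ?_ ?_ i
    · simpa using hp.1
    · intro j; simpa using hp.2 j
  · intro n _; exact Fin.cons_self_tail n
  · intro p _; simp
  · intro n _; rw [Fin.cons_self_tail n]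


lemma main_ind (k : ℕ) : ∀ (b : ℝ), 0 < b → b ≤ 2 →
    ∃ C : ℝ, 0 < C ∧ ∀ (N : ℕ) (m : ℤ × ℤ),
      ∑ n ∈ Fintype.piFinset (fun _ : Fin k => latticeBall N),
        jap (m + ∑ j, n j) ^ (-b) * ∏ j, jap (n j) ^ (-(2:ℝ))
      ≤ C * jap m ^ (-(b / 4 ^ k)) := by
  induction k with
  | zero =>
    intro b hb hb2
    refine ⟨1, one_pos, fun N m => ?_⟩
    have h1 : (Fintype.piFinset (fun _ : Fin 0 => latticeBall N)) = Finset.univ := by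
      ext n
      simp [Fintype.mem_piFinset]
    rw [h1]
    rw [Finset.sum_eq_single_of_mem (fun i : Fin 0 => (0:ℤ×ℤ)) (Finset.mem_univ _)
      (fun c _ hc => absurd (funext (fun i : Fin 0 => i.elim0) : c = _) hc)]
    simp only [Finset.univ_eq_empty, Finset.sum_empty, Finset.prod_empty, add_zero, mul_one,
      pow_zero, one_mul]
    norm_num
  | succ k ih =>
    intro b hb hb2
    obtain ⟨CA, hCA, hCAle⟩ := lemmaA hb hb2
    obtain ⟨C', hC', hC'le⟩ := ih (b/4) (by linarith) (by linarith)
    refine ⟨CA * C', mul_pos hCA hC', fun N m => ?_⟩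
    rw [sum_piFinset_cons, Finset.sum_comm]
    have step1 : ∀ y ∈ Fintype.piFinset (fun _ : Fin k => latticeBall N),
        ∑ x ∈ latticeBall N, (jap (m + ∑ j, (Fin.cons x y : Fin (k+1) → ℤ × ℤ) j) ^ (-b) *
          ∏ j, jap ((Fin.cons x y : Fin (k+1) → ℤ × ℤ) j) ^ (-(2:ℝ)))
        ≤ (CA * jap ((m + ∑ j, y j)) ^ (-(b/4))) * ∏ j, jap (y j) ^ (-(2:ℝ)) := by
      intro y _
      have hyprod : (0:ℝ) ≤ ∏ j, jap (y j) ^ (-(2:ℝ)) :=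
        Finset.prod_nonneg (fun j _ => Real.rpow_nonneg (jap_pos _).le _)
      have heq : ∀ x : ℤ × ℤ,
          jap (m + ∑ j, (Fin.cons x y : Fin (k+1) → ℤ × ℤ) j) ^ (-b) *
            ∏ j, jap ((Fin.cons x y : Fin (k+1) → ℤ × ℤ) j) ^ (-(2:ℝ))
          = (jap x ^ (-(2:ℝ)) * jap ((m + ∑ j, y j) + x) ^ (-b)) * ∏ j, jap (y j) ^ (-(2:ℝ)) := by
        intro x
        rw [Fin.sum_univ_succ, Fin.prod_univ_succ]
        simp only [Fin.cons_zero, Fin.cons_succ]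
        rw [show m + (x + ∑ j, y j) = (m + ∑ j, y j) + x by abel]
        ring
      rw [Finset.sum_congr rfl (fun x _ => heq x), ← Finset.sum_mul]
      exact mul_le_mul_of_nonneg_right (hCAle (latticeBall N) (m + ∑ j, y j)) hyprod
    calc ∑ y ∈ Fintype.piFinset (fun _ : Fin k => latticeBall N), ∑ x ∈ latticeBall N,
          (jap (m + ∑ j, (Fin.cons x y : Fin (k+1) → ℤ × ℤ) j) ^ (-b) *
            ∏ j, jap ((Fin.cons x y : Fin (k+1) → ℤ × ℤ) j) ^ (-(2:ℝ)))
        ≤ ∑ y ∈ Fintype.piFinset (fun _ : Fin k => latticeBall N),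
          (CA * jap ((m + ∑ j, y j)) ^ (-(b/4))) * ∏ j, jap (y j) ^ (-(2:ℝ)) :=
          Finset.sum_le_sum step1
      _ = CA * ∑ y ∈ Fintype.piFinset (fun _ : Fin k => latticeBall N),
          jap ((m + ∑ j, y j)) ^ (-(b/4)) * ∏ j, jap (y j) ^ (-(2:ℝ)) := by
          rw [Finset.mul_sum]; apply Finset.sum_congr rfl; intro y _; ring
      _ ≤ CA * (C' * jap m ^ (-(b/4 / 4 ^ k))) :=
          mul_le_mul_of_nonneg_left (hC'le N m) hCA.le
      _ = CA * C' * jap m ^ (-(b / 4 ^ (k+1))) := by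
          rw [show b/4/4^k = b/4^(k+1) by rw [pow_succ]; ring]
          ring

theorem lattice_multi_convolution_sum_bound (ε : ℝ) (hε : 0 < ε) (k : ℕ) (hk : 1 ≤ k) :
    ∃ C : ℝ, 0 < C ∧ ∀ N : ℕ,
      ∑ n ∈ Fintype.piFinset (fun _ : Fin k => latticeBall N),
        jap (∑ j, n j) ^ (-(2 * ε)) * ∏ j, jap (n j) ^ (-(2 : ℝ))
      ≤ C := by
  set b : ℝ := min (2 * ε) 2 with hbdef
  have hb : 0 < b := lt_min (by linarith) two_pos
  have hb2 : b ≤ 2 := min_le_right _ _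
  obtain ⟨C, hC, hCle⟩ := main_ind k b hb hb2
  refine ⟨C, hC, fun N => ?_⟩
  have hjap0 : jap 0 = 1 := by
    rw [jap]
    norm_num
  have h1 := hCle N 0
  rw [hjap0, Real.one_rpow, mul_one] at h1
  refine le_trans (Finset.sum_le_sum ?_) h1
  intro n _
  have hprod : (0:ℝ) ≤ ∏ j, jap (n j) ^ (-(2:ℝ)) :=
    Finset.prod_nonneg (fun j _ => Real.rpow_nonneg (jap_pos _).le _)
  apply mul_le_mul_of_nonneg_right _ hprod
  rw [zero_add]
  exact Real.rpow_le_rpow_of_exponent_le (one_le_jap _)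
    (by simp only [neg_le_neg_iff]; exact min_le_left _ _)
end
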